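/- arXiv:1802.06452 — 6 statements merged into one kernel-verified Lean document; each statement's English description precedes it below -/
import Mathlib

section
/- Let K be a field and p₁, p₋₁ ∈ K. Let u, v : ℤ³ → K with v nowhere zero, and for a function f write f̃(n₁,n₋₁,n) = f(n₁+1,n₋₁,n), f̌(n₁,n₋₁,n) = f(n₁,n₋₁+1,n), ḟ(n₁,n₋₁,n) = f(n₁,n₋₁,n+1), ḟ̲(n₁,n₋₁,n) = f(n₁,n₋₁,n−1). Assume the Miura transforms hold at every lattice point: p₁ + u̇ − ũ = p₁·ṽ/v and 1 + p₋₁·(u − ǔ) = v̌/v̲̇. Then at every lattice point u satisfies the unmodified discrete-time 2D Toda equation: (p₁ + u̇̌ − ũ̌)·(1 + p₋₁·(u − ǔ)) = (p₁ + u − ũ̲̇)·(1 + p₋₁·(ũ − ũ̌)). -/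
theorem miura_implies_unmodified {K : Type*} [Field K] (p1 pm1 : K)
    (u v : ℤ → ℤ → ℤ → K) (hv : ∀ a b c, v a b c ≠ 0)
    (hM1 : ∀ a b c : ℤ, p1 + u a b (c + 1) - u (a + 1) b c =
      p1 * v (a + 1) b c / v a b c)
    (hM2 : ∀ a b c : ℤ, 1 + pm1 * (u a b c - u a (b + 1) c) =
      v a (b + 1) c / v a b (c - 1)) :
    ∀ a b c : ℤ,
      (p1 + u a (b + 1) (c + 1) - u (a + 1) (b + 1) c) *
          (1 + pm1 * (u a b c - u a (b + 1) c)) =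
        (p1 + u a b c - u (a + 1) b (c - 1)) *
          (1 + pm1 * (u (a + 1) b c - u (a + 1) (b + 1) c)) := by
  intro a b c
  have h1 := hM1 a (b + 1) c
  have h2 := hM2 a b c
  have h3 := hM1 a b (c - 1)
  have h4 := hM2 (a + 1) b c
  rw [show c - 1 + 1 = c by ring] at h3
  rw [h1, h2, h3, h4]
  field_simp [hv a (b+1) c, hv a b (c-1), hv (a+1) b (c-1)]
end

section
/- Let K be a field and p₁, p₋₁ ∈ K. Let u, P, Q : ℤ³ → K be defined on the lattice with shifts as usual (tilde = n₁-shift, check = n₋₁-shift, dot = n-shift), where P = p₋₁⁻¹ + u − ǔ and Q = p₁ + u̇ − ũ, with p₋₁ ≠ 0. If u satisfies the unmodified discrete-time 2D Toda equation (p₁ + u̇̌ − ũ̌)·(1 + p₋₁(u − ǔ)) = (p₁ + u − ũ̲̇)·(1 + p₋₁(ũ − ũ̌)) at every lattice point, and all of P, P̃, Q, Q̲̇ are nowhere zero, then Q̌/Q̲̇ = P̃/P at every lattice point. -/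
theorem nonpotential_first_component {K : Type*} [Field K] (p1 pm1 : K)
    (hp : pm1 ≠ 0)
    (u P Q : ℤ → ℤ → ℤ → K)
    (hP : ∀ a b c : ℤ, P a b c = pm1⁻¹ + u a b c - u a (b + 1) c)
    (hQ : ∀ a b c : ℤ, Q a b c = p1 + u a b (c + 1) - u (a + 1) b c)
    (heq : ∀ a b c : ℤ,
      (p1 + u a (b + 1) (c + 1) - u (a + 1) (b + 1) c) *
          (1 + pm1 * (u a b c - u a (b + 1) c)) =
        (p1 + u a b c - u (a + 1) b (c - 1)) *
          (1 + pm1 * (u (a + 1) b c - u (a + 1) (b + 1) c)))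
    (hPne : ∀ a b c, P a b c ≠ 0)
    (hPtne : ∀ a b c, P (a + 1) b c ≠ 0)
    (hQne : ∀ a b c, Q a b c ≠ 0)
    (hQdne : ∀ a b c, Q a b (c - 1) ≠ 0) :
    ∀ a b c : ℤ,
      Q a (b + 1) c / Q a b (c - 1) = P (a + 1) b c / P a b c := by
  intro a b c
  rw [div_eq_div_iff (hQdne a b c) (hPne a b c)]
  have hc : c - 1 + 1 = c := by ring
  rw [hQ, hQ, hP, hP, hc]
  have h := heq a b c
  field_simp
  linear_combination h
end

section
/- Let K be a field and p₁, p₋₁ ∈ K with p₁ ≠ 0 and p₋₁ ≠ 0. Let u : ℤ³ → K and define 𝔲(n₁,n₋₁,n) = u(n₁,n₋₁,n) − n₁·p₁ − n₋₁/p₋₁ (using the additive group structure, interpreting integer multiples in K). Then, at any lattice point where all four factors below are nonzero, u satisfies (p₁ + u̇̌ − ũ̌)·(1 + p₋₁(u − ǔ)) = (p₁ + u − ũ̲̇)·(1 + p₋₁(ũ − ũ̌)) if and only if 𝔲 satisfies (𝔲 − 𝔲̌)·(𝔲̇̌ − 𝔲̃̌) = (𝔲 − 𝔲̲̃̇)·(𝔲̃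 − 𝔲̃̌). -/
lemma octa_aux {K : Type*} [Field K] (p1 pm1 : K) (hpm1 : pm1 ≠ 0)
    (X Y Z W : K) :
    (p1 + X) * (1 + pm1 * Y) = (p1 + Z) * (1 + pm1 * W) ↔
      (Y + 1 / pm1) * (X + p1) = (Z + p1) * (W + 1 / pm1) := by
  constructor <;> intro h
  · linear_combination pm1⁻¹ * h - (Y * (X + p1) - W * (Z + p1)) * mul_inv_cancel₀ hpm1
  · linear_combination pm1 * h - (X - Z) * mul_inv_cancel₀ hpm1

theorem point_transform_octahedron {K : Type*} [Field K] (p1 pm1 : K)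
    (hp1 : p1 ≠ 0) (hpm1 : pm1 ≠ 0)
    (u 𝔲 : ℤ → ℤ → ℤ → K)
    (h𝔲 : ∀ a b c : ℤ, 𝔲 a b c = u a b c - (a : K) * p1 - (b : K) / pm1) :
    ∀ a b c : ℤ,
      (p1 + u a (b + 1) (c + 1) - u (a + 1) (b + 1) c ≠ 0) →
      (1 + pm1 * (u a b c - u a (b + 1) c) ≠ 0) →
      (p1 + u a b c - u (a + 1) b (c - 1) ≠ 0) →
      (1 + pm1 * (u (a + 1) b c - u (a + 1) (b + 1) c) ≠ 0) →
      (((p1 + u a (b + 1) (c + 1) - u (a + 1) (b + 1) c) *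
            (1 + pm1 * (u a b c - u a (b + 1) c)) =
          (p1 + u a b c - u (a + 1) b (c - 1)) *
            (1 + pm1 * (u (a + 1) b c - u (a + 1) (b + 1) c))) ↔
        ((𝔲 a b c - 𝔲 a (b + 1) c) *
            (𝔲 a (b + 1) (c + 1) - 𝔲 (a + 1) (b + 1) c) =
          (𝔲 a b c - 𝔲 (a + 1) b (c - 1)) *
            (𝔲 (a + 1) b c - 𝔲 (a + 1) (b + 1) c))) := by
  intro a b c h1 h2 h3 h4
  have e1 : 𝔲 a b c - 𝔲 a (b + 1) c = (u a b c - u a (b + 1) c) + 1 / pm1 := by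
    rw [h𝔲, h𝔲]; push_cast; ring
  have e2 : 𝔲 a (b + 1) (c + 1) - 𝔲 (a + 1) (b + 1) c =
      (u a (b + 1) (c + 1) - u (a + 1) (b + 1) c) + p1 := by
    rw [h𝔲, h𝔲]; push_cast; ring
  have e3 : 𝔲 a b c - 𝔲 (a + 1) b (c - 1) = (u a b c - u (a + 1) b (c - 1)) + p1 := by
    rw [h𝔲, h𝔲]; push_cast; ring
  have e4 : 𝔲 (a + 1) b c - 𝔲 (a + 1) (b + 1) c =
      (u (a + 1) b c - u (a + 1) (b + 1) c) + 1 / pm1 := by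
    rw [h𝔲, h𝔲]; push_cast; ring
  rw [e1, e2, e3, e4]
  have := octa_aux p1 pm1 hpm1
    (u a (b + 1) (c + 1) - u (a + 1) (b + 1) c)
    (u a b c - u a (b + 1) c)
    (u a b c - u (a + 1) b (c - 1))
    (u (a + 1) b c - u (a + 1) (b + 1) c)
  constructor <;> intro h
  · have h' := this.mp (by linear_combination h)
    linear_combination h'
  · have h' := this.mpr (by linear_combination h)
    linear_combination h'
end

section
/- Let K be a field and let k, k', p₁, p₋₁, A ∈ K be such that k, k', k+k', p₁+k, p₁−k', p₋₁+k⁻¹, p₋₁−k'⁻¹ are all nonzero. Define τ : ℤ³ → K by τ(n₁,n₋₁,n) = 1 + (A/(k+k'))·((p₁+k)/(p₁−k'))^{n₁}·((p₋₁+k⁻¹)/(p₋₁−k'⁻¹))^{n₋₁}·(−k/k')^n. Then τ satisfies the bilinear discrete-time 2D Toda lattice equation p₁p₋₁·(τ·τ̃̌ − τ̃·τ̌) = τ·τ̃̌ − τ̇̌·τ̲̃̇ at every lattice point, where tilde, check, dot, underdot denote the unit forward shift in n₁, forward shift in n₋₁, forward shift in n, and backward shift in n respectively. -/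
set_option maxHeartbeats 1000000 in
theorem one_soliton_bilinear {K : Type*} [Field K]
    (k k' p1 pm1 A : K)
    (h1 : k ≠ 0) (h2 : k' ≠ 0) (h3 : k + k' ≠ 0)
    (h4 : p1 + k ≠ 0) (h5 : p1 - k' ≠ 0)
    (h6 : pm1 + k⁻¹ ≠ 0) (h7 : pm1 - k'⁻¹ ≠ 0)
    (τ : ℤ → ℤ → ℤ → K)
    (hτ : ∀ a b c : ℤ, τ a b c = 1 + (A / (k + k')) *
      ((p1 + k) / (p1 - k')) ^ a * ((pm1 + k⁻¹) / (pm1 - k'⁻¹)) ^ b *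
        (-k / k') ^ c) :
    ∀ a b c : ℤ,
      p1 * pm1 * (τ a b c * τ (a + 1) (b + 1) c -
          τ (a + 1) b c * τ a (b + 1) c) =
        τ a b c * τ (a + 1) (b + 1) c -
          τ a (b + 1) (c + 1) * τ (a + 1) b (c - 1) := by
  intro a b c
  have hP : (p1 + k) / (p1 - k') ≠ 0 := div_ne_zero h4 h5
  have hQ : (pm1 + k⁻¹) / (pm1 - k'⁻¹) ≠ 0 := div_ne_zero h6 h7
  have hR : -k / k' ≠ 0 := div_ne_zero (neg_ne_zero.mpr h1) h2
  set P := (p1 + k) / (p1 - k') with hPdef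
  set Q := (pm1 + k⁻¹) / (pm1 - k'⁻¹) with hQdef
  set R := -k / k' with hRdef
  have h6' : k * pm1 + 1 ≠ 0 := by
    have e : k * (pm1 + k⁻¹) = k * pm1 + 1 := by field_simp
    rw [← e]; exact mul_ne_zero h1 h6
  have h7' : k' * pm1 - 1 ≠ 0 := by
    have e : k' * (pm1 - k'⁻¹) = k' * pm1 - 1 := by field_simp
    rw [← e]; exact mul_ne_zero h2 h7
  have e6 : pm1 + k⁻¹ = (k * pm1 + 1) / k := by field_simp
  have e7 : pm1 - k'⁻¹ = (k' * pm1 - 1) / k' := by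
    rw [sub_div, mul_div_cancel_left₀ pm1 h2, one_div]
  have hQ' : Q = ((k * pm1 + 1) * k') / (k * (k' * pm1 - 1)) := by
    rw [hQdef, e6, e7, div_div_div_eq]
  have hR' : R⁻¹ = -(k' / k) := by
    rw [hRdef, neg_div, inv_neg, inv_div]
  have l1 : 1 - P = -(k + k') / (p1 - k') := by
    rw [hPdef]; field_simp; ring
  have l2 : 1 - Q = -(k + k') / (k * (k' * pm1 - 1)) := by
    rw [hQ', eq_div_iff (mul_ne_zero h1 h7'), sub_mul, div_mul_cancel₀ _ (mul_ne_zero h1 h7')]; ring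
  have l3 : Q * R = -((k * pm1 + 1) / (k' * pm1 - 1)) := by
    rw [hQ', hRdef]; field_simp
  have l4 : P * R⁻¹ = -((k' * (p1 + k)) / (k * (p1 - k'))) := by
    rw [hPdef, hR']; field_simp
  have l5 : P * Q = ((p1 + k) * ((k * pm1 + 1) * k')) / ((p1 - k') * (k * (k' * pm1 - 1))) := by
    rw [hPdef, hQ', div_mul_div_comm]
  have hD2 : k * (k' * pm1 - 1) ≠ 0 := mul_ne_zero h1 h7'
  have hD : (p1 - k') * (k * (k' * pm1 - 1)) ≠ 0 := mul_ne_zero h5 hD2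
  have r3 : (k * pm1 + 1) / (k' * pm1 - 1) =
      ((k * pm1 + 1) * (k * (p1 - k'))) / ((p1 - k') * (k * (k' * pm1 - 1))) := by
    rw [div_eq_div_iff h7' hD]; ring
  have r4 : (k' * (p1 + k)) / (k * (p1 - k')) =
      ((k' * (p1 + k)) * (k' * pm1 - 1)) / ((p1 - k') * (k * (k' * pm1 - 1))) := by
    rw [div_eq_div_iff (mul_ne_zero h1 h5) hD]; ring
  have key : p1 * pm1 * ((1 - P) * (1 - Q)) = 1 + P * Q - Q * R - P * R⁻¹ := by
    have comb : ∀ x y z d : K, d ≠ 0 → 1 + x / d + y / d + z / d = (d + x + y + z) / d := by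
      intro x y z d hd
      rw [add_div, add_div, add_div, div_self hd]
    rw [l1, l2, l3, l4, l5, sub_neg_eq_add, sub_neg_eq_add, r3, r4,
      div_mul_div_comm, mul_div_assoc', comb _ _ _ _ hD, div_eq_div_iff hD hD]
    ring
  have hRR : R * R⁻¹ = 1 := mul_inv_cancel₀ hR
  simp only [hτ, zpow_add_one₀ hP, zpow_add_one₀ hQ, zpow_add_one₀ hR,
    zpow_sub_one₀ hR]
  set x := P ^ a with hx
  set y := Q ^ b with hy
  set z := R ^ c with hz
  linear_combination (A / (k + k') * x * y * z) * key +
    (A / (k + k') * x * y * z) ^ 2 * P * Q * hRR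
end

section
/- Let K be a field, p₁, p₋₁ ∈ K, and let u₀, u₁ : ℤ² → K (functions of (n₁,n₋₁), with tilde and check the unit shifts in n₁ and n₋₁). For k ∈ K \ {0} define the 2×2 matrices L(k) = [[p₁ + u₁ − ũ₀, 1], [k², p₁ + u₀ − ũ₁]] and M(k) = [[p₋₁, k⁻²·(1 + p₋₁(u₀ − ǔ₀))], [1 + p₋₁(u₁ − ǔ₁), p₋₁]]. If u₀, u₁ satisfy the A₁^{(1)} discrete-time 2D Toda system (p₁ + ǔ₁ − ũ̌₀)·(1 + p₋₁(u₀ − ǔ₀)) = (p₁ + u₀ − ũ₁)·(1 + p₋₁(ũ₀ − ũ̌₀)) and (p₁ + ǔ₀ − ũ̌₁)·(1 + p₋₁(u₁ − ǔ₁)) = (p₁ + u₁ − ũ₀)·(1 + p₋₁(ũ₁ − ũ̌₁)), then the Lax compatibility M̃(k)·L(k) = Ľ(k)·M(k) holds for all k ∈ K \ {0} at every lattice point. -/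
theorem A1_lax_compatibility {K : Type*} [Field K] (p1 pm1 : K)
    (u₀ u1 : ℤ → ℤ → K)
    (heq0 : ∀ a b : ℤ,
      (p1 + u1 a (b + 1) - u₀ (a + 1) (b + 1)) *
          (1 + pm1 * (u₀ a b - u₀ a (b + 1))) =
        (p1 + u₀ a b - u1 (a + 1) b) *
          (1 + pm1 * (u₀ (a + 1) b - u₀ (a + 1) (b + 1))))
    (heq1 : ∀ a b : ℤ,
      (p1 + u₀ a (b + 1) - u1 (a + 1) (b + 1)) *
          (1 + pm1 * (u1 a b - u1 a (b + 1))) =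
        (p1 + u1 a b - u₀ (a + 1) b) *
          (1 + pm1 * (u1 (a + 1) b - u1 (a + 1) (b + 1)))) :
    ∀ k : K, k ≠ 0 → ∀ a b : ℤ,
      (!![pm1, k⁻¹ ^ 2 * (1 + pm1 * (u₀ (a + 1) b - u₀ (a + 1) (b + 1)));
          1 + pm1 * (u1 (a + 1) b - u1 (a + 1) (b + 1)), pm1] *
        !![p1 + u1 a b - u₀ (a + 1) b, 1;
           k ^ 2, p1 + u₀ a b - u1 (a + 1) b] :
        Matrix (Fin 2) (Fin 2) K) =
      !![p1 + u1 a (b + 1) - u₀ (a + 1) (b + 1), 1;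
         k ^ 2, p1 + u₀ a (b + 1) - u1 (a + 1) (b + 1)] *
        !![pm1, k⁻¹ ^ 2 * (1 + pm1 * (u₀ a b - u₀ a (b + 1)));
           1 + pm1 * (u1 a b - u1 a (b + 1)), pm1] := by
  intro k hk a b
  ext i j
  fin_cases i <;> fin_cases j <;>
    simp only [Matrix.mul_apply, Fin.sum_univ_two, Matrix.cons_val', Matrix.cons_val_zero,
      Matrix.cons_val_one, Matrix.head_cons, Matrix.empty_val', Matrix.cons_val_fin_one,
      Matrix.head_fin_const, Matrix.of_apply, Fin.zero_eta, Fin.mk_one] <;>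
    field_simp
  · ring
  · linear_combination -heq0 a b
  · linear_combination -heq1 a b
  · ring
end

section
/- Let K be a field and p₁, p₋₁ ∈ K. Let u, v, τ : ℤ³ → K with τ nowhere zero, satisfying the bilinear transforms p₁ + u̇ − ũ = p₁·τ·τ̃̇/(τ̇·τ̃), 1 + p₋₁·(u − ǔ) = τ̲̇·τ̌̇/(τ·τ̌), and v = τ̇/τ at every lattice point (with the usual shift notation). Then the Miura transforms hold at every lattice point: p₁ + u̇ − ũ = p₁·ṽ/v and 1 + p₋₁·(u − ǔ) = v̌/v̲̇. -/
theorem bilinear_implies_miura {K : Type*} [Field K] (p1 pm1 : K)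
    (u v τ : ℤ → ℤ → ℤ → K) (hτ : ∀ a b c, τ a b c ≠ 0)
    (hB1 : ∀ a b c : ℤ, p1 + u a b (c + 1) - u (a + 1) b c =
      p1 * (τ a b c * τ (a + 1) b (c + 1)) /
        (τ a b (c + 1) * τ (a + 1) b c))
    (hB2 : ∀ a b c : ℤ, 1 + pm1 * (u a b c - u a (b + 1) c) =
      τ a b (c - 1) * τ a (b + 1) (c + 1) / (τ a b c * τ a (b + 1) c))
    (hB3 : ∀ a b c : ℤ, v a b c = τ a b (c + 1) / τ a b c) :
    ∀ a b c : ℤ,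
      (p1 + u a b (c + 1) - u (a + 1) b c =
        p1 * v (a + 1) b c / v a b c) ∧
      (1 + pm1 * (u a b c - u a (b + 1) c) =
        v a (b + 1) c / v a b (c - 1)) := by
  intro a b c
  constructor
  · rw [hB1, hB3, hB3]
    field_simp
  · rw [hB2, hB3, hB3]
    have : c - 1 + 1 = c := by ring
    rw [this]
    field_simp
end
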